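/- arXiv:math/9902137 — 4 statements merged into one kernel-verified Lean document; each statement's English description precedes it below -/
import Mathlib

section
/- Let H be a Hausdorff, abelian, cancellative, reduced topological monoid allowing finite decimation, in which every non-unit is a convergent product of topologically prime elements. Then for x ∈ H, x ≠ 1, the following are equivalent: (i) x is topologically prime; (ii) x is prime; (iii) x is irreducible. -/
def Reduced (H : Type) [Monoid H] : Prop := ∀ u : H, IsUnit u → u = 1

def AllowsFiniteDecimation (H : Type) [CommMonoid H] [TopologicalSpace H] : Prop :=
  ∀ (ι : Type) (f : ι → H) (S : Set ι), Sᶜ.Finite → Multipliable f →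
    Multipliable fun i : S => f i

/-- Irreducible: a finite product representation by non-units has `p` among the factors. -/
def PIrred {H : Type} [CommMonoid H] (p : H) : Prop :=
  p ≠ 1 ∧ ∀ l : List H, (∀ x ∈ l, x ≠ 1) → p = l.prod → p ∈ l

/-- Prime: `p ≠ 1` divides a finite product implies `p` divides some factor. -/
def PPrime {H : Type} [CommMonoid H] (p : H) : Prop :=
  p ≠ 1 ∧ ∀ l : List H, p ∣ l.prod → ∃ y ∈ l, p ∣ y

/-- Topologically prime: `p ≠ 1` divides a convergent product implies `p` divides
some factor. -/
def TopPrime {H : Type} [CommMonoid H] [TopologicalSpace H] (p : H) : Prop :=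
  p ≠ 1 ∧ ∀ (ι : Type) (f : ι → H) (g : H), HasProd f g → p ∣ g → ∃ i, p ∣ f i

private lemma top_to_prime {H : Type} [CommMonoid H] [TopologicalSpace H] {x : H}
    (h : TopPrime x) : PPrime x := by
  refine ⟨h.1, fun l hdvd => ?_⟩
  have hp : HasProd l.get l.prod := by
    have := hasProd_fintype l.get
    rwa [← List.prod_ofFn, List.ofFn_get] at this
  obtain ⟨i, hi⟩ := h.2 _ l.get l.prod hp hdvd
  exact ⟨l.get i, l.get_mem _, hi⟩

private lemma prime_to_irred {H : Type} [CancelCommMonoid H] (hred : Reduced H) {x : H}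
    (h : PPrime x) : PIrred x := by
  classical
  refine ⟨h.1, fun l hne hprod => ?_⟩
  obtain ⟨y, hyl, c, hc⟩ := h.2 l (hprod ▸ dvd_refl x)
  have herase : y * (l.erase y).prod = l.prod := List.prod_erase hyl
  have : x * 1 = x * (c * (l.erase y).prod) := by
    rw [mul_one, ← mul_assoc, ← hc, herase, ← hprod]
  have hu : c * (l.erase y).prod = 1 := (mul_left_cancel this).symm
  have hc1 : c = 1 := hred c (IsUnit.of_mul_eq_one _ hu)
  rw [hc1, mul_one] at hc
  exact hc ▸ hyl

private lemma irred_to_top {H : Type} [CancelCommMonoid H]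
    [TopologicalSpace H] [T2Space H] [ContinuousMul H]
    (hred : Reduced H) (hdec : AllowsFiniteDecimation H)
    (hatomic : ∀ h : H, h ≠ 1 →
      ∃ (ι : Type) (f : ι → H), (∀ i, TopPrime (f i)) ∧ HasProd f h)
    {x : H} (hx : x ≠ 1) (h : PIrred x) : TopPrime x := by
  obtain ⟨ι, f, hf, hprod⟩ := hatomic x hx
  -- ι is nonempty
  have hne : Nonempty ι := by
    by_contra hempty
    haveI : IsEmpty ι := not_nonempty_iff.mp hempty
    exact hx (hprod.unique hasProd_empty)
  obtain ⟨i0⟩ := hne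
  -- split off the factor f i0
  have ha : HasProd (f ∘ (↑) : ({i0} : Set ι) → H) (f i0) := hasProd_singleton i0 f
  have hm : Multipliable (fun i : (({i0} : Set ι)ᶜ : Set ι) => f i) := by
    apply hdec ι f (({i0} : Set ι)ᶜ)
    · rw [compl_compl]; exact Set.finite_singleton i0
    · exact ⟨x, hprod⟩
  obtain ⟨b, hb⟩ := hm
  have hxb : x = f i0 * b := ((ha.mul_compl hb).unique hprod).symm
  have hx_eq : x = f i0 := by
    by_cases hb1 : b = 1
    · rw [hb1, mul_one] at hxb; exact hxb
    · have hmem : x ∈ [f i0, b] := by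
        apply h.2
        · intro z hz
          simp only [List.mem_cons, List.not_mem_nil, or_false] at hz
          rcases hz with rfl | rfl
          · exact (hf i0).1
          · exact hb1
        · simpa using hxb
      simp only [List.mem_cons, List.not_mem_nil, or_false] at hmem
      rcases hmem with rfl | rfl
      · rfl
      · exfalso
        have : f i0 * x = 1 * x := by rw [one_mul, ← hxb]
        exact (hf i0).1 (mul_right_cancel this)
  exact hx_eq ▸ hf i0

/-- if every non-unit of `H` is a convergent product of topologically prime
elements, then for `x ≠ 1`: topologically prime ↔ prime ↔ irreducible. -/
theorem topPrime_iff_prime_iff_irreducible {H : Type} [CancelCommMonoid H]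
    [TopologicalSpace H] [T2Space H] [ContinuousMul H]
    (hred : Reduced H) (hdec : AllowsFiniteDecimation H)
    (hatomic : ∀ h : H, h ≠ 1 →
      ∃ (ι : Type) (f : ι → H), (∀ i, TopPrime (f i)) ∧ HasProd f h)
    {x : H} (hx : x ≠ 1) :
    (TopPrime x ↔ PPrime x) ∧ (PPrime x ↔ PIrred x) := by
  constructor
  · exact ⟨top_to_prime, fun hp =>
      irred_to_top hred hdec hatomic hx (prime_to_irred hred hp)⟩
  · exact ⟨prime_to_irred hred, fun hi =>
      top_to_prime (irred_to_top hred hdec hatomic hx hi)⟩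
end

section
/- Let H be a Hausdorff, abelian, cancellative, reduced topological monoid allowing arbitrary decimation. If H is topologically factorial (every non-unit has a factorisation into atoms as a convergent product, unique up to permutation/multiplicity), then every atom of H is prime. -/
def AllowsArbitraryDecimation (H : Type) [CommMonoid H] [TopologicalSpace H] : Prop :=
  ∀ (ι : Type) (f : ι → H), Multipliable f → ∀ S : Set ι, Multipliable fun i : S => f i

/-- Topologically factorial: every non-unit is a convergent product of atoms, and any two
such factorisations assign the same multiplicity to each element. -/
def TopFactorial (H : Type) [CommMonoid H] [TopologicalSpace H] : Prop :=
  ∀ h : H, h ≠ 1 →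
    (∃ (ι : Type) (f : ι → H), (∀ i, PIrred (f i)) ∧ HasProd f h) ∧
    ∀ (ι κ : Type) (f : ι → H) (g : κ → H), (∀ i, PIrred (f i)) → (∀ j, PIrred (g j)) →
      HasProd f h → HasProd g h →
      ∀ x : H, Nat.card {i : ι | f i = x} = Nat.card {j : κ | g j = x}

section Aux

/-- A convergent product over a disjoint sum computes the product of the two pieces. -/
lemma aux_hasProd_sumElim {H : Type} [CommMonoid H] [TopologicalSpace H] [ContinuousMul H]
    {ι κ : Type} {f : ι → H} {g : κ → H} {a b : H}
    (hf : HasProd f a) (hg : HasProd g b) : HasProd (Sum.elim f g) (a * b) := by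
  refine HasProd.mul_isCompl Set.isCompl_range_inl_range_inr ?_ ?_
  · exact (Equiv.ofInjective Sum.inl Sum.inl_injective).hasProd_iff.mp hf
  · exact (Equiv.ofInjective Sum.inr Sum.inr_injective).hasProd_iff.mp hg

/-- Each factor of a convergent product divides it (uses decimation). -/
lemma aux_dvd_of_hasProd {H : Type} [CommMonoid H] [TopologicalSpace H] [T2Space H]
    [ContinuousMul H] (hdec : AllowsArbitraryDecimation H)
    {ι : Type} {f : ι → H} {y : H} (hf : HasProd f y) (i0 : ι) : f i0 ∣ y := by
  have hm : Multipliable fun i : (({i0} : Set ι)ᶜ : Set ι) => f i :=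
    hdec ι f hf.multipliable _
  have h2 : HasProd (f ∘ (↑) : (({i0} : Set ι)ᶜ : Set ι) → H)
      (∏' i : (({i0} : Set ι)ᶜ : Set ι), f i) := hm.hasProd
  have h1 : HasProd (f ∘ (↑) : ({i0} : Set ι) → H) (f i0) := hasProd_singleton i0 f
  exact ⟨_, hf.unique (h1.mul_compl h2)⟩

/-- In a cancellative monoid, a non-unit can appear only finitely often in
a convergent product. -/
lemma aux_fiber_finite {H : Type} [CancelCommMonoid H] [TopologicalSpace H] [T2Space H]
    [ContinuousMul H] (hdec : AllowsArbitraryDecimation H) {p : H} (hp : p ≠ 1)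
    {ι : Type} {f : ι → H} (hf : Multipliable f) : {i : ι | f i = p}.Finite := by
  by_contra hinf
  rw [← Set.not_infinite, not_not] at hinf
  haveI : Infinite {i : ι | f i = p} := hinf.to_subtype
  let e := Infinite.natEmbedding {i : ι | f i = p}
  set u : ℕ → ι := fun n => (e n : ι) with hu
  have hui : Function.Injective u := Subtype.val_injective.comp e.injective
  have hmT : Multipliable fun i : (Set.range u) => f i := hdec ι f hf _
  have hconst : (fun i : (Set.range u) => f i) = fun _ : (Set.range u) => p := by
    funext i
    obtain ⟨n, hn⟩ := i.2
    rw [← hn]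
    exact (e n).2
  rw [hconst] at hmT
  have hmN : Multipliable (fun _ : ℕ => p) :=
    (Equiv.ofInjective u hui).multipliable_iff.mpr hmT
  have hv : HasProd (fun _ : ℕ => p) (∏' _ : ℕ, p) := hmN.hasProd
  have hmC : Multipliable fun _ : (({0} : Set ℕ)ᶜ : Set ℕ) => p :=
    hdec ℕ (fun _ => p) hmN _
  have hw : HasProd ((fun _ : ℕ => p) ∘ (↑) : (({0} : Set ℕ)ᶜ : Set ℕ) → H)
      (∏' _ : (({0} : Set ℕ)ᶜ : Set ℕ), p) := hmC.hasProd
  have h1 : HasProd ((fun _ : ℕ => p) ∘ (↑) : ({0} : Set ℕ) → H) p :=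
    hasProd_singleton 0 (fun _ : ℕ => p)
  have hv' : HasProd (fun _ : ℕ => p) (p * ∏' _ : (({0} : Set ℕ)ᶜ : Set ℕ), p) :=
    h1.mul_compl hw
  have heq1 : (∏' _ : ℕ, p) = p * ∏' _ : (({0} : Set ℕ)ᶜ : Set ℕ), p := hv.unique hv'
  have e2 : ℕ ≃ (({0} : Set ℕ)ᶜ : Set ℕ) :=
    { toFun := fun n => ⟨n + 1, by simp⟩
      invFun := fun x => x.1 - 1
      left_inv := fun n => by simp
      right_inv := fun x => by
        obtain ⟨x, hx⟩ := x
        have hx0 : x ≠ 0 := by simpa using hx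
        apply Subtype.ext
        show x - 1 + 1 = x
        omega }
  have hw' : HasProd (fun _ : ℕ => p) (∏' _ : (({0} : Set ℕ)ᶜ : Set ℕ), p) :=
    (e2.hasProd_iff (f := fun _ : (({0} : Set ℕ)ᶜ : Set ℕ) => p)).mpr hw
  have heq2 : (∏' _ : (({0} : Set ℕ)ᶜ : Set ℕ), p) = ∏' _ : ℕ, p := hw'.unique hv
  rw [heq2] at heq1
  exact hp (right_eq_mul.mp heq1)

/-- Combine atom factorisations of all members of a list into one factorisation of
its product, keeping track that every atom divides some member. -/
lemma aux_list {H : Type} [CommMonoid H] [TopologicalSpace H] [T2Space H] [ContinuousMul H]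
    (hdec : AllowsArbitraryDecimation H) (hfac : TopFactorial H) :
    ∀ l : List H, ∃ (κ : Type) (g : κ → H),
      (∀ j, PIrred (g j)) ∧ HasProd g l.prod ∧ ∀ j, ∃ y ∈ l, g j ∣ y := by
  intro l
  induction l with
  | nil =>
      exact ⟨Empty, fun i => i.elim, fun i => i.elim, by simpa using hasProd_empty,
        fun i => i.elim⟩
  | cons a t ih =>
      obtain ⟨κ, g, hg1, hg2, hg3⟩ := ih
      by_cases ha : a = 1
      · refine ⟨κ, g, hg1, ?_, ?_⟩
        · rw [List.prod_cons, ha, one_mul]; exact hg2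
        · intro j
          obtain ⟨y, hy, hd⟩ := hg3 j
          exact ⟨y, List.mem_cons_of_mem a hy, hd⟩
      · obtain ⟨ι, f, hf1, hf2⟩ := (hfac a ha).1
        refine ⟨ι ⊕ κ, Sum.elim f g, ?_, ?_, ?_⟩
        · rintro (i | j)
          exacts [hf1 i, hg1 j]
        · rw [List.prod_cons]
          exact aux_hasProd_sumElim hf2 hg2
        · rintro (i | j)
          · exact ⟨a, List.mem_cons_self, aux_dvd_of_hasProd hdec hf2 i⟩
          · obtain ⟨y, hy, hd⟩ := hg3 j
            exact ⟨y, List.mem_cons_of_mem a hy, hd⟩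

end Aux

/-- if `H` is topologically factorial then every atom of `H` is prime. -/
theorem atoms_are_prime_of_topFactorial {H : Type} [CancelCommMonoid H]
    [TopologicalSpace H] [T2Space H] [ContinuousMul H]
    (hred : Reduced H) (hdec : AllowsArbitraryDecimation H) (hfac : TopFactorial H) :
    ∀ p : H, PIrred p → PPrime p := by
  intro p hp
  refine ⟨hp.1, ?_⟩
  intro l hdvd
  obtain ⟨c, hc⟩ := hdvd
  by_cases hl : l.prod = 1
  · have hpc : p * c = 1 := by rw [← hc]; exact hl
    exact absurd (hred p (IsUnit.of_mul_eq_one c hpc)) hp.1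
  · obtain ⟨κ, g, hg1, hg2, hg3⟩ := aux_list hdec hfac l
    have hmain : ∃ (μ : Type) (f0 : μ → H) (i0 : μ),
        (∀ i, PIrred (f0 i)) ∧ HasProd f0 l.prod ∧ f0 i0 = p := by
      by_cases hc1 : c = 1
      · refine ⟨PUnit, fun _ => p, PUnit.unit, fun _ => hp, ?_, rfl⟩
        have hlp : l.prod = p := by rw [hc, hc1, mul_one]
        rw [hlp]
        exact hasProd_unique (fun _ : PUnit => p)
      · obtain ⟨ι, f, hf1, hf2⟩ := (hfac c hc1).1
        refine ⟨PUnit ⊕ ι, Sum.elim (fun _ => p) f, Sum.inl PUnit.unit, ?_, ?_, rfl⟩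
        · rintro (i | i)
          exacts [hp, hf1 i]
        · rw [hc]
          exact aux_hasProd_sumElim (hasProd_unique (fun _ : PUnit => p)) hf2
    obtain ⟨μ, f0, i0, hf0a, hf0p, hf0i⟩ := hmain
    have hcard := (hfac l.prod hl).2 μ κ f0 g hf0a hg1 hf0p hg2 p
    have hfin : {i : μ | f0 i = p}.Finite := aux_fiber_finite hdec hp.1 hf0p.multipliable
    have hne : Nat.card {i : μ | f0 i = p} ≠ 0 := by
      rw [Nat.card_ne_zero]
      exact ⟨⟨⟨i0, hf0i⟩⟩, hfin.to_subtype⟩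
    rw [hcard] at hne
    have hnon : Nonempty {j : κ | g j = p} := (Nat.card_ne_zero.mp hne).1
    obtain ⟨⟨j, hj⟩⟩ := hnon
    obtain ⟨y, hy, hd⟩ := hg3 j
    exact ⟨y, hy, hj ▸ hd⟩
end

section
/- Let H be a Hausdorff, abelian, cancellative, reduced topological monoid allowing arbitrary decimation and allowing dissociation. If H is topologically factorial, then every atom of H is topologically prime. -/
/-- `H` allows dissociation: a convergent product whose factors are themselves
convergent products converges as the product over the disjoint union. -/
def AllowsDissociation (H : Type) [CommMonoid H] [TopologicalSpace H] : Prop :=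
  ∀ (ι : Type) (κ : ι → Type) (e : ι → H) (b : H) (f : ∀ i, κ i → H),
    HasProd e b → (∀ i, HasProd (f i) (e i)) →
      HasProd (fun p : Σ i, κ i => f p.1 p.2) b

section TopologicalMonoid

variable {M ι : Type*} [TopologicalSpace M] [T2Space M]

theorem HasProd.dvd_of_multipliable_compl [CommMonoid M] [ContinuousMul M] {f : ι → M} {a : M}
    (hf : HasProd f a) (j : ι) (hc : Multipliable fun i : ({j}ᶜ : Set ι) => f i) : f j ∣ a :=
  ⟨_, hf.unique ((hasProd_singleton j f).mul_compl hc.hasProd)⟩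

theorem eq_one_of_hasProd_const [CancelCommMonoid M] [ContinuousMul M] [Infinite ι] {p a : M}
    (h : HasProd (fun _ : ι => p) a) : p = 1 := by
  classical
  have hpow : Filter.Tendsto (fun s : Finset ι => p ^ s.card) Filter.atTop (nhds a) := by
    simpa [HasProd] using h
  have henlarge : ∀ s : Finset ι, ∃ t : Finset ι, s ⊆ t ∧ t.card = s.card + 1 := fun s =>
    let ⟨x, hx⟩ := Infinite.exists_notMem_finset s
    ⟨insert x s, Finset.subset_insert x s, Finset.card_insert_of_notMem hx⟩
  choose t hst hcard using henlarge
  have ht : Filter.Tendsto t Filter.atTop Filter.atTop :=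
    Filter.tendsto_atTop_mono hst Filter.tendsto_id
  have hpa : p * a = a := by
    refine tendsto_nhds_unique ((hpow.const_mul p).congr fun s => ?_) (hpow.comp ht)
    simp [Function.comp, hcard, pow_succ']
  exact mul_eq_right.mp hpa

end TopologicalMonoid

namespace AllowsArbitraryDecimation

variable {H ι : Type} [TopologicalSpace H] [T2Space H]

theorem dvd_of_hasProd [CommMonoid H] [ContinuousMul H] (hdec : AllowsArbitraryDecimation H)
    {f : ι → H} {a : H} (hf : HasProd f a) (j : ι) : f j ∣ a :=
  hf.dvd_of_multipliable_compl j (hdec ι f hf.multipliable _)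

theorem finite_fiber_of_hasProd [CancelCommMonoid H] [ContinuousMul H]
    (hdec : AllowsArbitraryDecimation H) {f : ι → H} {a p : H} (hf : HasProd f a) (hp : p ≠ 1) :
    {i | f i = p}.Finite := by
  by_contra hinf
  have : Infinite {i | f i = p} := Set.infinite_coe_iff.mpr hinf
  obtain ⟨b, hb⟩ := hdec ι f hf.multipliable {i | f i = p}
  exact hp (eq_one_of_hasProd_const (ι := {i | f i = p}) (hb.congr_fun fun i => i.2.symm))

end AllowsArbitraryDecimation

namespace TopFactorial

theorem exists_hasProd_atoms {H : Type} [CommMonoid H] [TopologicalSpace H]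
    (hfac : TopFactorial H) (a : H) :
    ∃ (κ : Type) (f : κ → H), (∀ j, PIrred (f j)) ∧ HasProd f a := by
  by_cases ha : a = 1
  · exact ⟨Empty, Empty.elim, Empty.rec, ha ▸ hasProd_empty⟩
  · exact (hfac a ha).1

theorem exists_eq_of_hasProd_atoms {H : Type} [CancelCommMonoid H] [TopologicalSpace H]
    [T2Space H] [ContinuousMul H] (hfac : TopFactorial H) (hdec : AllowsArbitraryDecimation H)
    {ι κ : Type} {f : ι → H} {g : κ → H} {a : H} (ha : a ≠ 1) (hf : ∀ i, PIrred (f i))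
    (hg : ∀ j, PIrred (g j)) (hfa : HasProd f a) (hga : HasProd g a) (i : ι) :
    ∃ j, g j = f i := by
  have hfin : Finite {i' | f i' = f i} := (hdec.finite_fiber_of_hasProd hfa (hf i).1).to_subtype
  have hpos : Nat.card {i' | f i' = f i} ≠ 0 :=
    Nat.card_ne_zero.mpr ⟨⟨⟨i, rfl⟩⟩, hfin⟩
  rw [(hfac a ha).2 ι κ f g hf hg hfa hga (f i)] at hpos
  obtain ⟨⟨j, hj⟩⟩ := (Nat.card_ne_zero.mp hpos).1
  exact ⟨j, hj⟩

end TopFactorial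

/-- if `H` is topologically factorial and allows dissociation, then every
atom of `H` is topologically prime. -/
theorem atoms_are_topPrime_of_topFactorial {H : Type} [CancelCommMonoid H]
    [TopologicalSpace H] [T2Space H] [ContinuousMul H]
    (hred : Reduced H) (hdec : AllowsArbitraryDecimation H)
    (hdis : AllowsDissociation H) (hfac : TopFactorial H) :
    ∀ p : H, PIrred p → TopPrime p := by
  intro p hp
  refine ⟨hp.1, fun ι f g hfg ⟨c, hc⟩ => ?_⟩
  have hg : g ≠ 1 := fun h1 => hp.1 (hred p (IsUnit.of_mul_eq_one c (hc ▸ h1)))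
  obtain ⟨κ, fc, hfc_atoms, hfc⟩ := hfac.exists_hasProd_atoms c
  have hA : HasProd (Sum.elim (fun _ : Unit => p) fc) g :=
    hc ▸ (hasProd_unique (fun _ : Unit => p)).sum hfc
  have hA_atoms : ∀ q, PIrred (Sum.elim (fun _ : Unit => p) fc q) :=
    Sum.rec (fun _ => hp) hfc_atoms
  choose κB fB hB_atoms hB using fun i => hfac.exists_hasProd_atoms (f i)
  have hB_prod : HasProd (fun q : Σ i, κB i => fB q.1 q.2) g := hdis ι κB f g fB hfg hB
  obtain ⟨q, hq : fB q.1 q.2 = p⟩ := hfac.exists_eq_of_hasProd_atoms hdec hg hA_atoms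
    (fun q : Σ i, κB i => hB_atoms q.1 q.2) hA hB_prod (Sum.inl ())
  exact ⟨q.1, hq ▸ hdec.dvd_of_hasProd (hB q.1) q.2⟩
end

section
/- With H a Hausdorff, abelian, cancellative, reduced topological monoid allowing arbitrary decimation, the set Z(H) = {v: A(H) → ℕ : ∏_{a} a^{v(a)} converges in H} is a submonoid of ℕ^{A(H)} under pointwise addition, and the map π̄: Z(H) → H sending v to the value of the convergent product ∏_a a^{v(a)} is a monoid homomorphism. -/
def Atoms (H : Type) [CommMonoid H] : Type := {a : H // PIrred a}

/-- `Z(H) = {v : A(H) → ℕ | ∏_a a^{v(a)} converges}` is a submonoid of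
`ℕ^{A(H)}` under pointwise addition, and `π̄ : v ↦ ∏'_a a^{v(a)}` is a homomorphism:
`π̄(c+d) = π̄(c)·π̄(d)`. -/
theorem ZH_submonoid_and_factorisation_hom {H : Type} [CancelCommMonoid H]
    [TopologicalSpace H] [T2Space H] [ContinuousMul H]
    (hred : Reduced H) (hdec : AllowsArbitraryDecimation H) :
    (∃ Z : AddSubmonoid (Atoms H → ℕ),
      (Z : Set (Atoms H → ℕ)) = {v | Multipliable fun a : Atoms H => a.1 ^ v a}) ∧
    ∀ c d : Atoms H → ℕ,
      Multipliable (fun a : Atoms H => a.1 ^ c a) →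
      Multipliable (fun a : Atoms H => a.1 ^ d a) →
      Multipliable (fun a : Atoms H => a.1 ^ (c a + d a)) ∧
      (∏' a : Atoms H, a.1 ^ (c a + d a)) =
        (∏' a : Atoms H, a.1 ^ c a) * ∏' a : Atoms H, a.1 ^ d a := by
  have key : ∀ c d : Atoms H → ℕ,
      Multipliable (fun a : Atoms H => a.1 ^ c a) →
      Multipliable (fun a : Atoms H => a.1 ^ d a) →
      Multipliable (fun a : Atoms H => a.1 ^ (c a + d a)) ∧
      (∏' a : Atoms H, a.1 ^ (c a + d a)) =
        (∏' a : Atoms H, a.1 ^ c a) * ∏' a : Atoms H, a.1 ^ d a := by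
    intro c d hc hd
    have h : (fun a : Atoms H => a.1 ^ (c a + d a)) =
        fun a : Atoms H => a.1 ^ c a * a.1 ^ d a := by
      funext a; exact pow_add _ _ _
    constructor
    · rw [h]; exact hc.mul hd
    · rw [h]; exact hc.tprod_mul hd
  constructor
  · refine ⟨AddSubmonoid.mk
      ⟨setOf (fun v => Multipliable (fun a : Atoms H => a.1 ^ v a)), ?_⟩ ?_, rfl⟩
    · intro c d hc hd
      exact (key c d hc hd).1
    · simp only [Set.mem_setOf_eq, Pi.zero_apply, pow_zero]
      show Multipliable _
      simp only [Pi.zero_apply, pow_zero]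
      exact multipliable_one
  · exact fun c d hc hd => key c d hc hd
end
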